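/- arXiv:2110.14525 — 3 statements merged into one kernel-verified Lean document; each statement's English description precedes it below -/
import Mathlib

section
/- Under strong ignorability, the inverse-probability-weighted score has zero expectation: E[ t·s(y)/e(z) ] = E[s(y)], where e(z) = P(t=1 | z) is assumed strictly positive almost surely. -/
open MeasureTheory ProbabilityTheory

lemma aux_ae_indepFun {α Ω : Type*} {mα : MeasurableSpace α} {mΩ : MeasurableSpace Ω}
    (κ : Kernel α Ω) [IsMarkovKernel κ] (μ : Measure α)
    {t y : Ω → ℝ} (ht : Measurable t) (hy : Measurable y)
    (h : Kernel.IndepFun t y κ μ) :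
    ∀ᵐ a ∂μ, IndepFun t y (κ a) := by
  rw [Kernel.indepFun_iff_measure_inter_preimage_eq_mul] at h
  have h' : ∀ᵐ a ∂μ, ∀ (p q : ℚ), κ a (t ⁻¹' Set.Iic (p:ℝ) ∩ y ⁻¹' Set.Iic (q:ℝ))
      = κ a (t ⁻¹' Set.Iic (p:ℝ)) * κ a (y ⁻¹' Set.Iic (q:ℝ)) := by
    rw [ae_all_iff]; intro p; rw [ae_all_iff]; intro q
    exact h _ _ measurableSet_Iic measurableSet_Iic
  filter_upwards [h'] with a ha
  have hcomap : ∀ f : Ω → ℝ, MeasurableSpace.comap f inferInstance =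
      MeasurableSpace.generateFrom (Set.preimage f '' (⋃ q : ℚ, {Set.Iic (q:ℝ)})) := by
    intro f
    conv_lhs => rw [show (inferInstance : MeasurableSpace ℝ) = borel ℝ from BorelSpace.measurable_eq,
      Real.borel_eq_generateFrom_Iic_rat, MeasurableSpace.comap_generateFrom]
  have hpi : ∀ f : Ω → ℝ, IsPiSystem (Set.preimage f '' (⋃ q : ℚ, {Set.Iic (q:ℝ)})) := by
    intro f
    exact Real.isPiSystem_Iic_rat.comap f
  have hIndep : Indep (MeasurableSpace.comap t inferInstance)
      (MeasurableSpace.comap y inferInstance) (κ a) := by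
    refine IndepSets.indep ht.comap_le hy.comap_le (hpi t) (hpi y) (hcomap t) (hcomap y) ?_
    rw [IndepSets_iff]
    rintro _ _ ⟨S, hS, rfl⟩ ⟨T, hT, rfl⟩
    simp only [Set.mem_iUnion, Set.mem_singleton_iff] at hS hT
    obtain ⟨p, rfl⟩ := hS
    obtain ⟨q, rfl⟩ := hT
    exact ha p q
  exact hIndep

/-- Under strong ignorability (`t ⫫ y | z`), the inverse-probability-weighted score has zero
expectation: `E[ t·s(y)/e(z) ] = E[s(y)]`, where `e = E[t|z]` is strictly positive a.s. -/
theorem stmt_1 {Ω : Type*} [MeasurableSpace Ω] [StandardBorelSpace Ω] [Nonempty Ω]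
    (μ : Measure Ω) [IsProbabilityMeasure μ]
    (t y z : Ω → ℝ) (ht : Measurable t) (hy : Measurable y) (hz : Measurable z)
    (htval : ∀ ω, t ω = 0 ∨ t ω = 1)
    (hm : MeasurableSpace.comap z inferInstance ≤ (inferInstance : MeasurableSpace Ω))
    (hci : CondIndepFun (MeasurableSpace.comap z inferInstance) hm t y μ)
    (e : Ω → ℝ) (he : e = condExp (MeasurableSpace.comap z inferInstance) μ t)
    (hpos : ∀ᵐ ω ∂μ, 0 < e ω)
    (s : ℝ → ℝ) (hs : Measurable s)
    (hsint : Integrable (fun ω => s (y ω)) μ)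
    (hwint : Integrable (fun ω => t ω * s (y ω) / e ω) μ) :
    ∫ ω, t ω * s (y ω) / e ω ∂μ = ∫ ω, s (y ω) ∂μ := by
  -- basic integrability facts
  have htb : ∀ ω, ‖t ω‖ ≤ 1 := fun ω => by rcases htval ω with h | h <;> simp [h]
  have htint : Integrable t μ :=
    (integrable_const (1 : ℝ)).mono' ht.aestronglyMeasurable (ae_of_all _ htb)
  have htg : Integrable (fun ω => t ω * s (y ω)) μ :=
    hsint.bdd_mul ht.aestronglyMeasurable (ae_of_all _ htb)
  have hwint' : Integrable (fun ω => (e ω)⁻¹ * (t ω * s (y ω))) μ :=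
    hwint.congr (ae_of_all _ fun ω => by simp [div_eq_mul_inv, mul_comm])
  -- a.e. independence under the conditional kernel
  have hker : ∀ᵐ ω ∂μ, IndepFun t y (condExpKernel μ (MeasurableSpace.comap z inferInstance) ω) :=
    ae_of_ae_trim hm (aux_ae_indepFun (condExpKernel μ (MeasurableSpace.comap z inferInstance)) (μ.trim hm) ht hy hci)
  have hκt : ∀ᵐ ω ∂μ, Integrable t (condExpKernel μ (MeasurableSpace.comap z inferInstance) ω) := htint.condExpKernel_ae
  have hκg : ∀ᵐ ω ∂μ, Integrable (fun x => s (y x)) (condExpKernel μ (MeasurableSpace.comap z inferInstance) ω) := hsint.condExpKernel_ae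
  have hA := condExp_ae_eq_integral_condExpKernel (μ := μ) hm htg
  have hB := condExp_ae_eq_integral_condExpKernel (μ := μ) hm htint
  have hC := condExp_ae_eq_integral_condExpKernel (μ := μ) hm hsint
  -- factorization of the conditional expectation
  have h1 : μ[fun ω => t ω * s (y ω)|MeasurableSpace.comap z inferInstance] =ᵐ[μ]
      fun ω => e ω * (μ[fun ω => s (y ω)|MeasurableSpace.comap z inferInstance]) ω := by
    filter_upwards [hA, hB, hC, hκt, hκg, hker] with ω hA hB hC h1κ h2κ hκind
    have hind : IndepFun t (fun x => s (y x)) (condExpKernel μ (MeasurableSpace.comap z inferInstance) ω) := by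
      have := hκind.comp measurable_id hs
      exact this
    have := IndepFun.integral_fun_mul_eq_mul_integral hind h1κ.aestronglyMeasurable h2κ.aestronglyMeasurable
    calc (μ[fun ω => t ω * s (y ω)|MeasurableSpace.comap z inferInstance]) ω = ∫ x, t x * s (y x) ∂(condExpKernel μ (MeasurableSpace.comap z inferInstance) ω) := hA
      _ = (∫ x, t x ∂(condExpKernel μ (MeasurableSpace.comap z inferInstance) ω)) * ∫ x, s (y x) ∂(condExpKernel μ (MeasurableSpace.comap z inferInstance) ω) := this
      _ = e ω * (μ[fun ω => s (y ω)|MeasurableSpace.comap z inferInstance]) ω := by rw [← hB, ← hC, he]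
  -- pull-out property
  have he_sm : StronglyMeasurable[MeasurableSpace.comap z inferInstance] e := he ▸ stronglyMeasurable_condExp
  have heinv_sm : StronglyMeasurable[MeasurableSpace.comap z inferInstance] (fun ω => (e ω)⁻¹) :=
    (he_sm.measurable.inv).stronglyMeasurable
  have h2 : μ[fun ω => (e ω)⁻¹ * (t ω * s (y ω))|MeasurableSpace.comap z inferInstance] =ᵐ[μ]
      fun ω => (e ω)⁻¹ * (μ[fun ω => t ω * s (y ω)|MeasurableSpace.comap z inferInstance]) ω :=
    condExp_mul_of_stronglyMeasurable_left heinv_sm hwint' htg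
  -- conclude
  have h3 : μ[fun ω => (e ω)⁻¹ * (t ω * s (y ω))|MeasurableSpace.comap z inferInstance] =ᵐ[μ] μ[fun ω => s (y ω)|MeasurableSpace.comap z inferInstance] := by
    filter_upwards [h2, h1, hpos] with ω h2 h1 hpos
    rw [h2, h1, ← mul_assoc, inv_mul_cancel₀ hpos.ne', one_mul]
  calc ∫ ω, t ω * s (y ω) / e ω ∂μ
      = ∫ ω, (e ω)⁻¹ * (t ω * s (y ω)) ∂μ := by
        refine integral_congr_ae (ae_of_all _ fun ω => ?_)
        simp [div_eq_mul_inv, mul_comm]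
    _ = ∫ ω, (μ[fun ω => (e ω)⁻¹ * (t ω * s (y ω))|MeasurableSpace.comap z inferInstance]) ω ∂μ :=
        (integral_condExp hm).symm
    _ = ∫ ω, (μ[fun ω => s (y ω)|MeasurableSpace.comap z inferInstance]) ω ∂μ := integral_congr_ae h3
    _ = ∫ ω, s (y ω) ∂μ := integral_condExp hm
end

section
/- With H mutually exclusive assignment indicators t^(1),…,t^(H) summing to 1, propensities e^(h)(z) = E[t^(h)|z] > 0 a.s., weights w^(h)(z) = (Σ_k d^(k) e^(k)(z))/e^(h)(z) for nonnegative constants d^(k), and potential outcomes y^(h) with {y^(1),…,y^(H)} ⫫ {t^(1),…,t^(H)} | z, it holds that E[ Σ_h t^(h) w^(h)(z) s_h(y^(h)) ] = E[ Σ_{h,k} d^(k) e^(k)(z) s_h(y^(h)) ] for integrable measurable functions s_h. -/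
open MeasureTheory ProbabilityTheory

/-- With `H` mutually exclusive assignment indicators summing to 1, propensities
`e h = E[t h | z] > 0` a.s., weights `w h z = (Σ_k d k * e k z)/e h z` for nonnegative `d`,
and potential outcomes `y h` jointly conditionally independent of the assignments given `z`,
`E[ Σ_h t_h w_h(z) s_h(y_h) ] = E[ Σ_{h,k} d_k e_k(z) s_h(y_h) ]`. -/
theorem stmt_3 {Ω : Type*} [MeasurableSpace Ω] [StandardBorelSpace Ω] [Nonempty Ω]
    (μ : Measure Ω) [IsProbabilityMeasure μ] (H : ℕ)
    (t : Fin H → Ω → ℝ) (y : Fin H → Ω → ℝ) (z : Ω → ℝ)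
    (ht : ∀ h, Measurable (t h)) (hy : ∀ h, Measurable (y h)) (hz : Measurable z)
    (htval : ∀ h ω, t h ω = 0 ∨ t h ω = 1) (htsum : ∀ ω, ∑ h, t h ω = 1)
    (hm : MeasurableSpace.comap z inferInstance ≤ (inferInstance : MeasurableSpace Ω))
    (hci : CondIndepFun (MeasurableSpace.comap z inferInstance) hm
      (fun ω h => y h ω) (fun ω h => t h ω) μ)
    (e : Fin H → Ω → ℝ)
    (he : ∀ h, e h = condExp (MeasurableSpace.comap z inferInstance) μ (t h))
    (hpos : ∀ᵐ ω ∂μ, ∀ h, 0 < e h ω)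
    (d : Fin H → ℝ) (hd : ∀ k, 0 ≤ d k)
    (w : Fin H → Ω → ℝ) (hw : ∀ h ω, w h ω = (∑ k, d k * e k ω) / e h ω)
    (s : Fin H → ℝ → ℝ) (hs : ∀ h, Measurable (s h))
    (hint1 : Integrable (fun ω => ∑ h, t h ω * w h ω * s h (y h ω)) μ)
    (hint2 : Integrable (fun ω => ∑ h, ∑ k, d k * e k ω * s h (y h ω)) μ) :
    ∫ ω, ∑ h, t h ω * w h ω * s h (y h ω) ∂μ
      = ∫ ω, ∑ h, ∑ k, d k * e k ω * s h (y h ω) ∂μ := by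
  classical
  set Y : Ω → (Fin H → ℝ) := fun ω h => y h ω with hYdef
  set T : Ω → (Fin H → ℝ) := fun ω h => t h ω with hTdef
  have hYm : Measurable Y := measurable_pi_lambda _ hy
  have hTm : Measurable T := measurable_pi_lambda _ ht
  set p : Ω → ℝ × (Fin H → ℝ) := fun ω => (z ω, Y ω) with hpdef
  have hpm : Measurable p := hz.prodMk hYm
  have hm'' : MeasurableSpace.comap p inferInstance ≤ (inferInstance : MeasurableSpace Ω) :=
    hpm.comap_le
  have hm'le : MeasurableSpace.comap z inferInstance ≤ MeasurableSpace.comap p inferInstance := by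
    rintro _ ⟨E, hE, rfl⟩
    exact ⟨E ×ˢ Set.univ, hE.prod MeasurableSet.univ, by ext ω; simp [hpdef]⟩
  -- properties of e
  have heSM : ∀ k, StronglyMeasurable[MeasurableSpace.comap z inferInstance] (e k) :=
    fun k => (he k) ▸ stronglyMeasurable_condExp
  have heInt : ∀ k, Integrable (e k) μ := fun k => (he k) ▸ integrable_condExp
  have heM : ∀ k, Measurable[MeasurableSpace.comap p inferInstance] (e k) :=
    fun k => ((heSM k).measurable).mono hm'le le_rfl
  -- t is integrable
  have htabs : ∀ h ω, |t h ω| ≤ 1 := by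
    intro h ω; rcases htval h ω with h0 | h0 <;> simp [h0]
  have htInt : ∀ h, Integrable (t h) μ := fun h =>
    (integrable_const (1 : ℝ)).mono' (ht h).aestronglyMeasurable
      (Filter.Eventually.of_forall fun ω => by simpa using htabs h ω)
  -- mutual exclusivity
  have hexcl : ∀ ω (h : Fin H), t h ω = 1 → ∀ h', h' ≠ h → t h' ω = 0 := by
    intro ω h h1 h' hne
    have h0 : ∀ k ∈ Finset.univ.erase h, (0 : ℝ) ≤ t k ω := fun k _ => by
      rcases htval k ω with a | a <;> simp [a]
    have hadd : t h ω + ∑ k ∈ Finset.univ.erase h, t k ω = ∑ k, t k ω :=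
      Finset.add_sum_erase Finset.univ (fun k => t k ω) (Finset.mem_univ h)
    have hsum' : ∑ k ∈ Finset.univ.erase h, t k ω = 0 := by
      have := htsum ω; linarith [hadd]
    exact (Finset.sum_eq_zero_iff_of_nonneg h0).mp hsum' h'
      (Finset.mem_erase.mpr ⟨hne, Finset.mem_univ h'⟩)
  -- each LHS term is integrable
  have hterm : ∀ h, Integrable (fun ω => t h ω * w h ω * s h (y h ω)) μ := by
    intro h
    have hmeas : AEStronglyMeasurable
        (fun ω => t h ω * (∑ h', t h' ω * w h' ω * s h' (y h' ω))) μ :=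
      ((ht h).aestronglyMeasurable).mul hint1.1
    have heq : (fun ω => t h ω * w h ω * s h (y h ω))
        = fun ω => t h ω * (∑ h', t h' ω * w h' ω * s h' (y h' ω)) := by
      funext ω
      rcases htval h ω with h0 | h1
      · simp [h0]
      · rw [Finset.sum_eq_single h]
        · simp [h1]
        · intro h' _ hne; rw [hexcl ω h h1 h' hne]; ring
        · intro habs; exact absurd (Finset.mem_univ h) habs
    rw [heq]
    refine hint1.mono hmeas (Filter.Eventually.of_forall fun ω => ?_)
    rw [Real.norm_eq_abs, Real.norm_eq_abs, abs_mul]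
    exact mul_le_of_le_one_left (abs_nonneg _) (htabs h ω)
  -- t h as an indicator
  have hBind : ∀ h : Fin H,
      (T ⁻¹' ((fun v : Fin H → ℝ => v h) ⁻¹' {1})).indicator (fun _ => (1 : ℝ)) = t h := by
    intro h; funext ω
    have hmem : ω ∈ T ⁻¹' ((fun v : Fin H → ℝ => v h) ⁻¹' {1}) ↔ t h ω = 1 := Iff.rfl
    rcases htval h ω with h0 | h1
    · rw [Set.indicator_of_notMem (by rw [hmem, h0]; norm_num), h0]
    · rw [Set.indicator_of_mem (hmem.mpr h1), h1]
  -- KEY CLAIM: E[t h | σ(z, Y)] = e h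
  have claimB : ∀ h : Fin H, μ[t h | MeasurableSpace.comap p inferInstance] =ᵐ[μ] e h := by
    intro h
    have hCh : MeasurableSet ((fun v : Fin H → ℝ => v h) ⁻¹' {1}) :=
      (measurable_pi_apply h) (measurableSet_singleton 1)
    have hBmeas := hTm hCh
    have hgen : MeasurableSpace.comap p inferInstance
        = MeasurableSpace.generateFrom (Set.preimage p ''
            (Set.image2 (· ×ˢ ·) { u : Set ℝ | MeasurableSet u }
              { u : Set (Fin H → ℝ) | MeasurableSet u })) := by
      rw [← generateFrom_prod, MeasurableSpace.comap_generateFrom]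
    have hpi : IsPiSystem (Set.preimage p ''
        (Set.image2 (· ×ˢ ·) { u : Set ℝ | MeasurableSet u }
          { u : Set (Fin H → ℝ) | MeasurableSet u })) := by
      have h2 := IsPiSystem.comap (isPiSystem_prod) p
      exact h2
    have hsets : ∀ u : Set Ω, MeasurableSet[MeasurableSpace.comap p inferInstance] u →
        ∫ ω in u, e h ω ∂μ = ∫ ω in u, t h ω ∂μ := by
      have hglob : ∫ ω, e h ω ∂μ = ∫ ω, t h ω ∂μ := by
        rw [he h]; exact integral_condExp hm
      intro u hu
      refine MeasurableSpace.induction_on_inter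
        (m := MeasurableSpace.comap p inferInstance)
        (C := fun u _ => ∫ ω in u, e h ω ∂μ = ∫ ω in u, t h ω ∂μ)
        hgen hpi (by simp) ?_ ?_ ?_ _ hu
      · -- basic rectangles
        rintro _ ⟨R, ⟨E, hE, A, hA, rfl⟩, rfl⟩
        have hEA : p ⁻¹' (E ×ˢ A) = (z ⁻¹' E) ∩ (Y ⁻¹' A) := by
          ext ω; simp [hpdef, Set.mem_prod]
        rw [hEA]
        set S : Set Ω := z ⁻¹' E with hSdef
        set V : Set Ω := Y ⁻¹' A with hVdef
        set B : Set Ω := T ⁻¹' ((fun v : Fin H → ℝ => v h) ⁻¹' {1}) with hBdef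
        have hS' : MeasurableSet[MeasurableSpace.comap z inferInstance] S := ⟨E, hE, rfl⟩
        have hSmeas := hm _ hS'
        have hV := hYm hA
        -- conditional independence factorization
        have hfac := (condIndepFun_iff_condExp_inter_preimage_eq_mul hYm hTm).mp hci
          A ((fun v : Fin H → ℝ => v h) ⁻¹' {1}) hA hCh
        have hBe : μ⟦B | MeasurableSpace.comap z inferInstance⟧ = e h := by
          rw [show Set.indicator B (fun _ => (1:ℝ)) = t h from hBind h, ← he h]
        -- the indicator of V
        set g : Ω → ℝ := V.indicator (fun _ => (1 : ℝ)) with hgdef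
        have hgInt : Integrable g μ := (integrable_const (1 : ℝ)).indicator hV
        have hgle : ∀ ω, |g ω| ≤ 1 := fun ω => by
          by_cases hω : ω ∈ V <;> simp [hgdef, hω]
        have hesm0 := (heSM h).mono hm
        have hfg : Integrable (e h * g) μ :=
          ((heInt h).abs).mono' (hesm0.aestronglyMeasurable.mul hgInt.1)
            (Filter.Eventually.of_forall fun ω => by
              rw [Pi.mul_apply, Real.norm_eq_abs, abs_mul]
              exact mul_le_of_le_one_right (abs_nonneg _) (hgle ω))
        have hpull := condExp_mul_of_stronglyMeasurable_left (heSM h) hfg hgInt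
        -- e side
        have he_ind : (S ∩ V).indicator (fun ω => e h ω) = S.indicator (e h * g) := by
          funext ω
          by_cases hωS : ω ∈ S
          · by_cases hωV : ω ∈ V
            · simp [Set.indicator, hωS, hωV, Set.mem_inter_iff, hgdef]
            · simp [Set.indicator, hωS, hωV, hgdef]
          · simp [Set.indicator, hωS]
        have he_side : ∫ ω in S ∩ V, e h ω ∂μ = ∫ ω in S, (e h * g) ω ∂μ := by
          rw [← integral_indicator (hSmeas.inter hV), ← integral_indicator hSmeas, he_ind]
        -- t side
        have hIndInt : Integrable ((V ∩ B).indicator (fun _ => (1 : ℝ))) μ :=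
          (integrable_const (1 : ℝ)).indicator (hV.inter hBmeas)
        have ht_ind : (S ∩ V).indicator (fun ω => t h ω)
            = S.indicator ((V ∩ B).indicator (fun _ => (1 : ℝ))) := by
          funext ω
          have hmem : ω ∈ B ↔ t h ω = 1 := Iff.rfl
          by_cases hωS : ω ∈ S
          · by_cases hωV : ω ∈ V
            · rcases htval h ω with h0 | h1
              · have hnB : ω ∉ B := by rw [hmem, h0]; norm_num
                simp [Set.indicator, hωS, hωV, hnB, h0, Set.mem_inter_iff]
              · have hB' : ω ∈ B := hmem.mpr h1
                simp [Set.indicator, hωS, hωV, hB', h1, Set.mem_inter_iff]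
            · simp [Set.indicator, hωS, hωV, Set.mem_inter_iff]
          · simp [Set.indicator, hωS]
        have ht_side : ∫ ω in S ∩ V, t h ω ∂μ
            = ∫ ω in S, (V ∩ B).indicator (fun _ => (1 : ℝ)) ω ∂μ := by
          rw [← integral_indicator (hSmeas.inter hV), ← integral_indicator hSmeas, ht_ind]
        -- chain
        calc ∫ ω in S ∩ V, e h ω ∂μ
            = ∫ ω in S, (e h * g) ω ∂μ := he_side
          _ = ∫ ω in S, (μ[e h * g | MeasurableSpace.comap z inferInstance]) ω ∂μ :=
              (setIntegral_condExp hm hfg hS').symm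
          _ = ∫ ω in S, (μ⟦V | MeasurableSpace.comap z inferInstance⟧) ω
                * (μ⟦B | MeasurableSpace.comap z inferInstance⟧) ω ∂μ := by
              refine setIntegral_congr_ae hSmeas ?_
              filter_upwards [hpull] with ω hω _
              rw [hω, Pi.mul_apply, hBe, mul_comm]
          _ = ∫ ω in S, (μ⟦V ∩ B | MeasurableSpace.comap z inferInstance⟧) ω ∂μ := by
              refine setIntegral_congr_ae hSmeas ?_
              filter_upwards [hfac] with ω hω _
              exact hω.symm
          _ = ∫ ω in S, (V ∩ B).indicator (fun _ => (1 : ℝ)) ω ∂μ :=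
              setIntegral_condExp hm hIndInt hS'
          _ = ∫ ω in S ∩ V, t h ω ∂μ := ht_side.symm
      · -- complement
        intro u hu hP
        have h1 := integral_add_compl (hm'' _ hu) (heInt h)
        have h2 := integral_add_compl (hm'' _ hu) (htInt h)
        linarith
      · -- disjoint union
        intro f hdisj hfm hP
        rw [integral_iUnion (fun i => hm'' _ (hfm i)) hdisj ((heInt h).integrableOn),
          integral_iUnion (fun i => hm'' _ (hfm i)) hdisj ((htInt h).integrableOn)]
        exact tsum_congr hP
    exact (ae_eq_condExp_of_forall_setIntegral_eq hm'' (htInt h)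
      (fun u _ _ => (heInt h).integrableOn)
      (fun u hu _ => hsets u hu)
      (((heSM h).mono hm'le).aestronglyMeasurable)).symm
  -- measurability of y h w.r.t. σ(z, Y)
  have hp'' : Measurable[MeasurableSpace.comap p inferInstance] p := fun u hu => ⟨u, hu, rfl⟩
  have hym'' : ∀ h, Measurable[MeasurableSpace.comap p inferInstance] (y h) := fun h =>
    (((measurable_pi_apply h).comp measurable_snd).comp hp'' :
      Measurable[MeasurableSpace.comap p inferInstance] fun ω => (p ω).2 h)
  -- the per-h identity
  have hmain : ∀ h : Fin H,
      Integrable (fun ω => (∑ k, d k * e k ω) * s h (y h ω)) μ ∧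
      ∫ ω, t h ω * w h ω * s h (y h ω) ∂μ
        = ∫ ω, (∑ k, d k * e k ω) * s h (y h ω) ∂μ := by
    intro h
    set F : Ω → ℝ := fun ω => w h ω * s h (y h ω) with hFdef
    have hFm : Measurable[MeasurableSpace.comap p inferInstance] F := by
      have hsum : Measurable[MeasurableSpace.comap p inferInstance]
          fun ω => ∑ k, d k * e k ω :=
        Finset.measurable_sum _ fun k _ => (measurable_const.mul (heM k))
      have hw' : Measurable[MeasurableSpace.comap p inferInstance] (w h) := by
        have hwe : w h = fun ω => (∑ k, d k * e k ω) / e h ω := funext (hw h)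
        rw [hwe]; exact hsum.div (heM h)
      exact hw'.mul ((hs h).comp (hym'' h))
    have hFsm : StronglyMeasurable[MeasurableSpace.comap p inferInstance] F :=
      hFm.stronglyMeasurable
    have hprodInt : Integrable (F * t h) μ := by
      have hfe : F * t h = fun ω => t h ω * w h ω * s h (y h ω) := by
        funext ω; simp only [hFdef, Pi.mul_apply]; ring
      rw [hfe]; exact hterm h
    have hpull := condExp_mul_of_stronglyMeasurable_left hFsm hprodInt (htInt h)
    have hkey : μ[F * t h | MeasurableSpace.comap p inferInstance]
        =ᵐ[μ] fun ω => (∑ k, d k * e k ω) * s h (y h ω) := by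
      filter_upwards [hpull, claimB h, hpos] with ω h1 h2 h3
      have hne : e h ω ≠ 0 := (h3 h).ne'
      rw [h1, Pi.mul_apply, h2, hFdef]
      show w h ω * s h (y h ω) * e h ω = _
      rw [hw h ω]
      field_simp
    have hIntR : Integrable (fun ω => (∑ k, d k * e k ω) * s h (y h ω)) μ :=
      (integrable_condExp (m := MeasurableSpace.comap p inferInstance)).congr hkey
    refine ⟨hIntR, ?_⟩
    have hfun : (fun ω => t h ω * w h ω * s h (y h ω)) = F * t h := by
      funext ω; simp only [hFdef, Pi.mul_apply]; ring
    calc ∫ ω, t h ω * w h ω * s h (y h ω) ∂μ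
        = ∫ ω, (F * t h) ω ∂μ := by rw [hfun]
      _ = ∫ ω, (μ[F * t h | MeasurableSpace.comap p inferInstance]) ω ∂μ :=
          (integral_condExp hm'').symm
      _ = ∫ ω, (∑ k, d k * e k ω) * s h (y h ω) ∂μ := integral_congr_ae hkey
  -- assemble
  calc ∫ ω, ∑ h, t h ω * w h ω * s h (y h ω) ∂μ
      = ∑ h, ∫ ω, t h ω * w h ω * s h (y h ω) ∂μ :=
        integral_finset_sum _ fun h _ => hterm h
    _ = ∑ h, ∫ ω, (∑ k, d k * e k ω) * s h (y h ω) ∂μ :=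
        Finset.sum_congr rfl fun h _ => (hmain h).2
    _ = ∫ ω, ∑ h, (∑ k, d k * e k ω) * s h (y h ω) ∂μ :=
        (integral_finset_sum _ fun h _ => (hmain h).1).symm
    _ = ∫ ω, ∑ h, ∑ k, d k * e k ω * s h (y h ω) ∂μ := by
        congr 1; funext ω
        exact Finset.sum_congr rfl fun h _ => Finset.sum_mul _ _ _
end

section
/- In the doubly robust estimating equation, if the assignment model is correct (E[t^(h)|z] = e^(h)(z;α) a.s. with w^(h)(z;α) = Σ_k d^(k) e^(k)(z;α)/e^(h)(z;α)), then the augmentation term has zero expectation: E[ Σ_h (Σ_k d^(k) t^(k) − t^(h) w^(h)(z;α)) ∂_θ g^(h)(x^(h),z;θ,β) ] = 0 for any β, where g^(h) is σ(z)-measurable. -/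
open MeasureTheory ProbabilityTheory

/-- If the assignment model is correct (`E[t_h|z] = e_h(z;α)` a.s., with
`w_h(z;α) = Σ_k d_k e_k(z;α)/e_h(z;α)`), then the augmentation term of the doubly robust
estimating equation has zero expectation:
`E[ Σ_h (Σ_k d_k t_k − t_h w_h(z;α)) ∂_θ g_h(z) ] = 0` for any `g_h` measurable in `z`. -/
theorem stmt_12 {Ω : Type*} [MeasurableSpace Ω] [StandardBorelSpace Ω] [Nonempty Ω]
    (μ : Measure Ω) [IsProbabilityMeasure μ] (H : ℕ)
    (t : Fin H → Ω → ℝ) (z : Ω → ℝ)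
    (ht : ∀ k, Measurable (t k)) (hz : Measurable z)
    (htval : ∀ k ω, t k ω = 0 ∨ t k ω = 1) (htsum : ∀ ω, ∑ k, t k ω = 1)
    (d : Fin H → ℝ) (e : Fin H → ℝ → ℝ) (hemeas : ∀ k, Measurable (e k))
    (hepos : ∀ k x, 0 < e k x)
    (hcorrect : ∀ k, condExp (MeasurableSpace.comap z inferInstance) μ (t k)
      =ᵐ[μ] fun ω => e k (z ω))
    (w : Fin H → ℝ → ℝ) (hw : ∀ h x, w h x = (∑ k, d k * e k x) / e h x)
    (g : Fin H → ℝ → ℝ) (hg : ∀ h, Measurable (g h))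
    (hint : ∀ h, Integrable
      (fun ω => ((∑ k, d k * t k ω) - t h ω * w h (z ω)) * g h (z ω)) μ) :
    ∫ ω, ∑ h, ((∑ k, d k * t k ω) - t h ω * w h (z ω)) * g h (z ω) ∂μ = 0 := by
  have hm : MeasurableSpace.comap z inferInstance ≤ _ := hz.comap_le
  set m := MeasurableSpace.comap z inferInstance with hm_def
  have hzm : Measurable[m] z := fun s hs => ⟨s, hs, rfl⟩
  rw [integral_finset_sum _ (fun h _ => hint h)]
  apply Finset.sum_eq_zero
  intro h _
  -- the coefficient functions
  set F : Fin H → ℝ → ℝ := fun k x => (d k - (if k = h then w h x else 0)) * g h x with hF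
  set c : Fin H → Ω → ℝ := fun k ω => F k (z ω) with hc
  have hFmeas : ∀ k, Measurable (F k) := by
    intro k
    apply Measurable.mul _ (hg h)
    apply Measurable.sub measurable_const
    by_cases hk : k = h
    · simp [hk]
      have : Measurable (w h) := by
        have : w h = fun x => (∑ k, d k * e k x) / e h x := by
          funext x; exact hw h x
        rw [this]
        exact (Finset.measurable_sum _ fun k _ =>
          (hemeas k).const_mul (d k)).div (hemeas h)
      exact this
    · simp [hk]
  have hcm : ∀ k, StronglyMeasurable[m] (c k) := fun k =>
    ((hFmeas k).comp hzm).stronglyMeasurable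
  -- pointwise decomposition of the integrand
  set f : Ω → ℝ := fun ω => ((∑ k, d k * t k ω) - t h ω * w h (z ω)) * g h (z ω) with hf
  have hdecomp : ∀ ω, f ω = ∑ k, t k ω * c k ω := by
    intro ω
    simp only [hf, hc, hF]
    have e1 : ∀ k, t k ω * ((d k - (if k = h then w h (z ω) else 0)) * g h (z ω)) =
        d k * t k ω * g h (z ω) - (if k = h then t k ω * w h (z ω) * g h (z ω) else 0) := by
      intro k; by_cases hk : k = h <;> simp [hk] <;> ring
    rw [Finset.sum_congr rfl fun k _ => e1 k, Finset.sum_sub_distrib,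
      Finset.sum_ite_eq' Finset.univ h (fun k => t k ω * w h (z ω) * g h (z ω))]
    simp only [Finset.mem_univ, if_true]
    rw [sub_mul, Finset.sum_mul]
  -- each piece t_k * c_k equals t_k * f pointwise
  have hpiece : ∀ k ω, t k ω * c k ω = t k ω * f ω := by
    intro k ω
    rcases htval k ω with h0 | h1
    · simp [h0]
    · have hz0 : ∀ j, j ≠ k → t j ω = 0 := by
        intro j hj
        have hsum : ∑ j ∈ Finset.univ.erase k, t j ω = 0 := by
          have := htsum ω
          rw [← Finset.add_sum_erase _ _ (Finset.mem_univ k), h1] at this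
          linarith
        have := (Finset.sum_eq_zero_iff_of_nonneg (fun j _ => by
          rcases htval j ω with h' | h' <;> simp [h'])).mp hsum j
          (Finset.mem_erase.mpr ⟨hj, Finset.mem_univ j⟩)
        exact this
      have : f ω = c k ω := by
        simp only [hf, hc, hF]
        congr 1
        have hsum : (∑ j, d j * t j ω) = d k := by
          rw [Finset.sum_eq_single k (fun j _ hj => by rw [hz0 j hj]; ring)
            (fun hk => absurd (Finset.mem_univ k) hk), h1, mul_one]
        rw [hsum]
        by_cases hk : k = h
        · subst hk; simp [h1]
        · simp [hk, hz0 h (fun hh => hk hh.symm)]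
      rw [this]
  have hintf := hint h
  have hintk : ∀ k, Integrable (fun ω => t k ω * c k ω) μ := by
    intro k
    have : Integrable (fun ω => t k ω * f ω) μ := by
      apply Integrable.bdd_mul hintf ((ht k).aestronglyMeasurable)
      exact Filter.Eventually.of_forall (fun ω => (by rcases htval k ω with h' | h' <;> simp [h'] : ‖t k ω‖ ≤ 1))
    exact this.congr (Filter.Eventually.of_forall fun ω => (hpiece k ω).symm)
  have htk_int : ∀ k, Integrable (t k) μ := by
    intro k
    refine Integrable.mono' (integrable_const 1) ((ht k).aestronglyMeasurable) ?_
    exact Filter.Eventually.of_forall fun ω => by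
      rcases htval k ω with h' | h' <;> simp [h']
  -- conditional expectation pull-out for each k
  have hpull : ∀ k, ∫ ω, t k ω * c k ω ∂μ = ∫ ω, c k ω * e k (z ω) ∂μ := by
    intro k
    have hmul : Integrable (c k * t k) μ :=
      (hintk k).congr (Filter.Eventually.of_forall fun ω => by
        simp [mul_comm])
    have hce := condExp_mul_of_stronglyMeasurable_left (μ := μ) (hcm k) hmul (htk_int k)
    have h1 : ∫ ω, (c k * t k) ω ∂μ = ∫ ω, (μ[c k * t k|m]) ω ∂μ :=
      (integral_condExp hm (f := c k * t k)).symm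
    have h2 : ∫ ω, (μ[c k * t k|m]) ω ∂μ = ∫ ω, c k ω * e k (z ω) ∂μ := by
      apply integral_congr_ae
      filter_upwards [hce, hcorrect k] with ω h1 h2
      simp only [h1, Pi.mul_apply, h2]
    calc ∫ ω, t k ω * c k ω ∂μ = ∫ ω, (c k * t k) ω ∂μ := by
          simp [mul_comm]
      _ = ∫ ω, c k ω * e k (z ω) ∂μ := h1.trans h2
  -- integrability of c_k * e_k(z)
  have hint2 : ∀ k, Integrable (fun ω => c k ω * e k (z ω)) μ := by
    intro k
    have hmul : Integrable (c k * t k) μ :=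
      (hintk k).congr (Filter.Eventually.of_forall fun ω => by simp [mul_comm])
    have hce := condExp_mul_of_stronglyMeasurable_left (μ := μ) (hcm k) hmul (htk_int k)
    apply (integrable_condExp (m := m) (f := c k * t k)).congr
    filter_upwards [hce, hcorrect k] with ω h1 h2
    simp only [h1, Pi.mul_apply, h2]
  calc ∫ ω, f ω ∂μ = ∫ ω, ∑ k, t k ω * c k ω ∂μ := by
        apply integral_congr_ae
        exact Filter.Eventually.of_forall fun ω => hdecomp ω
    _ = ∑ k, ∫ ω, t k ω * c k ω ∂μ := integral_finset_sum _ (fun k _ => hintk k)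
    _ = ∑ k, ∫ ω, c k ω * e k (z ω) ∂μ := Finset.sum_congr rfl (fun k _ => hpull k)
    _ = ∫ ω, ∑ k, c k ω * e k (z ω) ∂μ := (integral_finset_sum _ (fun k _ => hint2 k)).symm
    _ = 0 := by
        have : ∀ ω, ∑ k, c k ω * e k (z ω) = 0 := by
          intro ω
          simp only [hc, hF]
          have key : ∀ k, (d k - (if k = h then w h (z ω) else 0)) * g h (z ω) * e k (z ω) =
              (d k * e k (z ω) - (if k = h then w h (z ω) * e k (z ω) else 0)) * g h (z ω) := by
            intro k; by_cases hk : k = h <;> simp [hk] <;> ring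
          rw [Finset.sum_congr rfl (fun k _ => key k), ← Finset.sum_mul,
            Finset.sum_sub_distrib, Finset.sum_ite_eq' Finset.univ h
              (fun k => w h (z ω) * e k (z ω))]
          simp only [Finset.mem_univ, if_true]
          rw [hw h (z ω), div_mul_cancel₀ _ (hepos h (z ω)).ne']
          simp
        simp [this]
end
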